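/- Let n ≥ 1, let (a_1, …, a_n) ∈ N(Δ_n), let x_1, …, x_{n+1} be the sequence produced from (a_1, …, a_n) by the recursive rule, and set a'_i = i + x_{i+1} − asc(x_1 x_2 … x_{i+1}) for 1 ≤ i ≤ n. Then a'_i = a_i for all 1 ≤ i ≤ n. -/

import Mathlib

/-- `ascZ x m` is the number of ascents in the integer sequence `x 1, …, x m`. -/
def ascZ (x : ℕ → ℤ) (m : ℕ) : ℕ :=
  ((Finset.Ico 1 m).filter (fun i => x i < x (i + 1))).card

/-- `(a 1, …, a n) ∈ N(Δ_n)`: a 01-filling of the staircase `Δ_n` where row `i`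
has its unique 1 in column `a i` (so `1 ≤ a i ≤ i`), with no NE-chain of length 3
(no `i < j < k` with `a i ≥ a j ≥ a k`). -/
def NDelta (a : ℕ → ℕ) (n : ℕ) : Prop :=
  (∀ i, 1 ≤ i → i ≤ n → 1 ≤ a i ∧ a i ≤ i) ∧
  ¬ ∃ i j k, 1 ≤ i ∧ i < j ∧ j < k ∧ k ≤ n ∧ a j ≤ a i ∧ a k ≤ a j

/-- `x 1, …, x (n+1)` is the (integer-valued) sequence produced from `(a 1, …, a n)`
by the recursive rule: `x 1 = 0`, `x 2 = 1`, and for `2 ≤ i ≤ n`,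
`x (i+1) = asc(x 1 … x i) + 1 + a i - i` if `a (i-1) < a i`, and
`x (i+1) = asc(x 1 … x i) + a i - i` if `a (i-1) ≥ a i`. -/
def RecRule (a : ℕ → ℕ) (n : ℕ) (x : ℕ → ℤ) : Prop :=
  x 1 = 0 ∧ x 2 = 1 ∧ ∀ i, 2 ≤ i → i ≤ n →
    x (i + 1) = if a (i - 1) < a i
      then (ascZ x i : ℤ) + 1 + (a i : ℤ) - (i : ℤ)
      else (ascZ x i : ℤ) + (a i : ℤ) - (i : ℤ)

/-!
Writing `A m = asc(x 1 … x m)`, one shows by induction on `i` that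
`x (i+1) = A (i+1) + a i - i`, which is the claim. Given this at `i`, the rule gives
`x (i+2) - x (i+1) = a (i+1) - a i` if `a i < a (i+1)` and `a (i+1) - a i - 1` otherwise, so
`x` ascends at position `i+1` exactly when `a` does; hence `A (i+2) = A (i+1) + [a i < a (i+1)]`
and the rule turns into the identity at `i+1`.
-/

lemma ascZ_succ (x : ℕ → ℤ) {m : ℕ} (hm : 1 ≤ m) :
    (ascZ x (m + 1) : ℤ) = ascZ x m + if x m < x (m + 1) then 1 else 0 := by
  unfold ascZ
  rw [Nat.Ico_succ_right_eq_insert_Ico hm, Finset.filter_insert]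
  split <;> simp [Finset.card_insert_of_notMem]

lemma ascZ_two {x : ℕ → ℤ} (h1 : x 1 = 0) (h2 : x 2 = 1) : ascZ x 2 = 1 := by
  simp [ascZ, show Finset.Ico 1 2 = {1} from rfl, Finset.filter_singleton, h1, h2]

lemma RecRule.eq_ascZ_add {a : ℕ → ℕ} {n : ℕ} {x : ℕ → ℤ} (hx : RecRule a n x)
    (ha₁ : a 1 = 1) : ∀ i, 1 ≤ i → i ≤ n → x (i + 1) = ascZ x (i + 1) + a i - i := by
  obtain ⟨h1, h2, hrec⟩ := hx
  intro i hi
  induction i, hi using Nat.le_induction with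
  | base =>
    intro _
    rw [h2, ascZ_two h1 h2, ha₁]
    norm_num
  | succ i hi ih =>
    intro hin
    have hprev := ih (by omega)
    have hnext := hrec (i + 1) (by omega) hin
    rw [Nat.add_sub_cancel] at hnext
    rw [ascZ_succ x (by omega : 1 ≤ i + 1)]
    by_cases hrise : a i < a (i + 1)
    · rw [if_pos hrise] at hnext
      have hxrise : x (i + 1) < x (i + 1 + 1) := by omega
      rw [if_pos hxrise]
      push_cast at hnext ⊢
      omega
    · rw [if_neg hrise] at hnext
      have hxfall : ¬ x (i + 1) < x (i + 1 + 1) := by omega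
      rw [if_neg hxfall]
      push_cast at hnext ⊢
      omega

theorem stmt7_general (n : ℕ) (a : ℕ → ℕ) (hA : NDelta a n)
    (x : ℕ → ℤ) (hx : RecRule a n x)
    (a' : ℕ → ℤ)
    (ha' : ∀ i, 1 ≤ i → i ≤ n → a' i = (i : ℤ) + x (i + 1) - (ascZ x (i + 1) : ℤ)) :
    ∀ i, 1 ≤ i → i ≤ n → a' i = (a i : ℤ) := by
  intro i hi hin
  have ha₁ : a 1 = 1 := by
    have := hA.1 1 le_rfl (hi.trans hin)
    omega
  rw [ha' i hi hin, hx.eq_ascZ_add ha₁ i hi hin]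
  ring

/-- Part of Theorem 3.5 (`φ ∘ φ' = id`): if `(a 1, …, a n) ∈ N(Δ_n)`, `x` is produced from
it by the recursive rule, and `a' i = i + x (i+1) - asc(x 1 … x (i+1))`, then `a' i = a i`
for all `1 ≤ i ≤ n`. -/
theorem stmt7 (n : ℕ) (hn : 1 ≤ n) (a : ℕ → ℕ) (hA : NDelta a n)
    (x : ℕ → ℤ) (hx : RecRule a n x)
    (a' : ℕ → ℤ)
    (ha' : ∀ i, 1 ≤ i → i ≤ n → a' i = (i : ℤ) + x (i + 1) - (ascZ x (i + 1) : ℤ)) :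
    ∀ i, 1 ≤ i → i ≤ n → a' i = (a i : ℤ) :=
  stmt7_general n a hA x hx a' ha'
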